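/- arXiv:2004.01143 — 4 statements merged into one kernel-verified Lean document; each statement's English description precedes it below -/
import Mathlib

section
/- Let v ≥ 2, c ≥ 2, and ñ ≥ c be integers with c dividing ñ, and set n = vñ. Let H^D = (1_v 1_v^T) ⊗ H^D_blk be the n×n Kronecker product of the v×v all-ones matrix with H^D_blk = (c/(vñ))B − (1/(vñ))J. Then H^D has eigenvalue 1 with multiplicity c−1 and eigenvalue 0 with multiplicity n−c+1; in particular H^D is positive semi-definite, ‖H^D‖ = 1, and for every real n×n matrix K the matrix K^T H^D K is positive semi-definite. -/
open Matrix Kronecker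

/-- The spectral (operator) norm of a real square matrix. -/
noncomputable def specNorm {I : Type*} [Fintype I] [DecidableEq I]
    (A : Matrix I I ℝ) : ℝ :=
  ‖Matrix.toEuclideanCLM (𝕜 := ℝ) A‖

/-- The `nt × nt` block-diagonal matrix with `c` all-ones diagonal blocks of size `nt/c`. -/
def blockOnes (nt c : ℕ) : Matrix (Fin nt) (Fin nt) ℝ :=
  Matrix.of fun s t => if (s : ℕ) / (nt / c) = (t : ℕ) / (nt / c) then 1 else 0

/-- The `nt × nt` all-ones matrix. -/
def allOnes (nt : ℕ) : Matrix (Fin nt) (Fin nt) ℝ :=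
  Matrix.of fun _ _ => 1

/-! With `m = ñ / c`, the block matrix `B` and the all-ones matrix `J` satisfy `B² = m B` and
`B J = J B = m J`, so `M = c B - J` satisfies `M² = ñ M`. Hence `H^D_blk² = H^D_blk / v`, and
together with `J_v² = v J_v` this makes `H^D` a symmetric idempotent, i.e. an orthogonal projection.
Its eigenvalues are therefore `0` or `1`, the multiplicity of `1` is `tr H^D = c - 1`, and being a
nonzero projection it has operator norm `1` (`‖P‖ = ‖Pᴴ P‖ = ‖P‖²`). -/

open Polynomial Finset

namespace Matrix.IsHermitian

variable {𝕜 n : Type*} [RCLike 𝕜] [Fintype n] [DecidableEq n] {A : Matrix n n 𝕜}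

lemma rootMultiplicity_charpoly (hA : A.IsHermitian) (a : ℝ) :
    A.charpoly.rootMultiplicity (a : 𝕜) = #{i | hA.eigenvalues i = a} := by
  rw [← count_roots, hA.roots_charpoly_eq_eigenvalues, Multiset.count_map, card_def, filter_val]
  congr 1
  exact Multiset.filter_congr fun i _ => by simp [eq_comm]

lemma eigenvalues_eq_zero_or_one (hA : A.IsHermitian) (hP : IsIdempotentElem A) (i : n) :
    hA.eigenvalues i = 0 ∨ hA.eigenvalues i = 1 :=
  hP.spectrum_subset ℝ (hA.spectrum_real_eq_range_eigenvalues ▸ Set.mem_range_self i)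

lemma rootMultiplicity_one_charpoly_of_isIdempotentElem (hA : A.IsHermitian)
    (hP : IsIdempotentElem A) : (A.charpoly.rootMultiplicity 1 : 𝕜) = A.trace := by
  rw [hA.trace_eq_sum_eigenvalues, ← RCLike.ofReal_one, hA.rootMultiplicity_charpoly,
    natCast_card_filter]
  refine sum_congr rfl fun i _ => ?_
  rcases hA.eigenvalues_eq_zero_or_one hP i with h | h <;> simp [h]

lemma rootMultiplicity_zero_add_rootMultiplicity_one_charpoly (hA : A.IsHermitian)
    (hP : IsIdempotentElem A) :
    A.charpoly.rootMultiplicity 0 + A.charpoly.rootMultiplicity 1 = Fintype.card n := by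
  rw [← RCLike.ofReal_zero, ← RCLike.ofReal_one, hA.rootMultiplicity_charpoly,
    hA.rootMultiplicity_charpoly, ← card_univ,
    ← card_filter_add_card_filter_not (s := univ) (fun i => hA.eigenvalues i = 0)]
  congr 2
  exact filter_congr fun i _ => by rcases hA.eigenvalues_eq_zero_or_one hP i with h | h <;> simp [h]

end Matrix.IsHermitian

lemma IsStarProjection.norm_eq_one {E : Type*} [NonUnitalNormedRing E] [StarRing E] [CStarRing E]
    {e : E} (he : IsStarProjection e) (h : e ≠ 0) : ‖e‖ = 1 := by
  have : ‖e‖ * ‖e‖ = ‖e‖ := by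
    rw [← CStarRing.norm_star_mul_self, he.isSelfAdjoint.star_eq, he.isIdempotentElem.eq]
  exact (mul_eq_right₀ (norm_ne_zero_iff.mpr h)).mp this

open scoped Matrix.Norms.L2Operator in
lemma specNorm_eq_one_of_isStarProjection {I : Type*} [Fintype I] [DecidableEq I]
    {P : Matrix I I ℝ} (hP : IsStarProjection P) (h : P ≠ 0) : specNorm P = 1 :=
  hP.norm_eq_one h

lemma allOnes_mul_self (n : ℕ) : allOnes n * allOnes n = (n : ℝ) • allOnes n := by
  ext; simp [allOnes, mul_apply]

lemma trace_allOnes (n : ℕ) : (allOnes n).trace = n := by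
  simp [allOnes, trace]

lemma transpose_allOnes (n : ℕ) : (allOnes n)ᵀ = allOnes n := rfl

lemma transpose_blockOnes (n c : ℕ) : (blockOnes n c)ᵀ = blockOnes n c := by
  ext; simp [blockOnes, eq_comm]

lemma trace_blockOnes (n c : ℕ) : (blockOnes n c).trace = n := by
  simp [blockOnes, trace]

section Blocks

variable {c m : ℕ}

lemma blockOnes_apply (hc : 0 < c) (s t : Fin (c * m)) :
    blockOnes (c * m) c s t = if (s : ℕ) / m = (t : ℕ) / m then 1 else 0 := by
  simp [blockOnes, Nat.mul_div_cancel_left m hc]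

lemma card_filter_div_eq_div (s : Fin (c * m)) :
    #{k : Fin (c * m) | (s : ℕ) / m = (k : ℕ) / m} = m := by
  have hdiv : ∀ p : Fin c × Fin m, ((finProdFinEquiv p : ℕ)) / m = p.1 := fun ⟨q, r⟩ => by
    simp [finProdFinEquiv_apply_val, Nat.add_mul_div_left _ _ (Fin.pos r), Nat.div_eq_of_lt r.2]
  have hs : (s : ℕ) / m < c := Nat.div_lt_of_lt_mul (mul_comm c m ▸ s.2)
  rw [card_filter, ← finProdFinEquiv.sum_comp, Fintype.sum_prod_type]
  simp only [hdiv, sum_const, card_univ, Fintype.card_fin, smul_eq_mul, mul_ite, mul_one, mul_zero]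
  rw [Fintype.sum_eq_single ⟨_, hs⟩ fun x hx => if_neg fun h => hx (Fin.ext h.symm)]
  simp

lemma blockOnes_mul_self (hc : 0 < c) :
    blockOnes (c * m) c * blockOnes (c * m) c = (m : ℝ) • blockOnes (c * m) c := by
  ext s t
  simp only [mul_apply, blockOnes_apply hc, Matrix.smul_apply, smul_eq_mul, mul_ite, mul_one,
    mul_zero]
  split_ifs with hst
  · rw [← hst]
    simp only [eq_comm (b := (s : ℕ) / m), ← ite_and, and_self]
    rw [sum_boole, card_filter_div_eq_div]
  · exact sum_eq_zero fun k _ => by split_ifs <;> simp_all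

lemma blockOnes_mul_allOnes (hc : 0 < c) :
    blockOnes (c * m) c * allOnes (c * m) = (m : ℝ) • allOnes (c * m) := by
  ext s t
  simp [mul_apply, blockOnes_apply hc, allOnes, card_filter_div_eq_div]

lemma allOnes_mul_blockOnes (hc : 0 < c) :
    allOnes (c * m) * blockOnes (c * m) c = (m : ℝ) • allOnes (c * m) := by
  rw [← transpose_blockOnes, ← transpose_allOnes, ← transpose_mul, blockOnes_mul_allOnes hc,
    transpose_smul, transpose_allOnes]

end Blocks

noncomputable def betweenClassBlock (v c nt : ℕ) : Matrix (Fin nt) (Fin nt) ℝ :=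
  ((c : ℝ) / ((v : ℝ) * nt)) • blockOnes nt c - ((1 : ℝ) / ((v : ℝ) * nt)) • allOnes nt

noncomputable def betweenClassMatrix (v c nt : ℕ) : Matrix (Fin v × Fin nt) (Fin v × Fin nt) ℝ :=
  allOnes v ⊗ₖ betweenClassBlock v c nt

section BetweenClass

variable {v c m nt : ℕ}

lemma betweenClassBlock_eq_smul (v c nt : ℕ) :
    betweenClassBlock v c nt = ((v : ℝ) * nt)⁻¹ • ((c : ℝ) • blockOnes nt c - allOnes nt) := by
  rw [betweenClassBlock, smul_sub, smul_smul, div_eq_inv_mul, one_div]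

lemma centeredBlockOnes_mul_self (hc : 0 < c) :
    ((c : ℝ) • blockOnes (c * m) c - allOnes (c * m)) *
        ((c : ℝ) • blockOnes (c * m) c - allOnes (c * m)) =
      ((c * m : ℕ) : ℝ) • ((c : ℝ) • blockOnes (c * m) c - allOnes (c * m)) := by
  simp only [sub_mul, mul_sub, smul_mul_assoc, mul_smul_comm, blockOnes_mul_self hc,
    blockOnes_mul_allOnes hc, allOnes_mul_blockOnes hc, allOnes_mul_self, smul_smul, smul_sub]
  push_cast
  module

lemma betweenClassBlock_mul_self (hc : 0 < c) (hm : 0 < m) :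
    betweenClassBlock v c (c * m) * betweenClassBlock v c (c * m) =
      (v : ℝ)⁻¹ • betweenClassBlock v c (c * m) := by
  have hcm : ((c * m : ℕ) : ℝ) ≠ 0 := by positivity
  rw [betweenClassBlock_eq_smul, smul_mul_smul_comm, centeredBlockOnes_mul_self hc, smul_smul,
    smul_smul]
  congr 1
  field_simp

lemma transpose_betweenClassBlock (v c nt : ℕ) :
    (betweenClassBlock v c nt)ᵀ = betweenClassBlock v c nt := by
  rw [betweenClassBlock, transpose_sub, transpose_smul, transpose_smul, transpose_blockOnes,
    transpose_allOnes]

lemma trace_betweenClassBlock (hnt : nt ≠ 0) :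
    (betweenClassBlock v c nt).trace = ((c : ℝ) - 1) / v := by
  rw [betweenClassBlock, trace_sub, trace_smul, trace_smul, trace_blockOnes, trace_allOnes,
    smul_eq_mul, smul_eq_mul]
  field_simp

lemma isStarProjection_betweenClassMatrix (hv : v ≠ 0) (hc : 0 < c) (hm : 0 < m) :
    IsStarProjection (betweenClassMatrix v c (c * m)) := by
  constructor
  · rw [IsIdempotentElem, betweenClassMatrix, ← mul_kronecker_mul, allOnes_mul_self,
      betweenClassBlock_mul_self hc hm, smul_kronecker, kronecker_smul, smul_smul,
      mul_inv_cancel₀ (Nat.cast_ne_zero.mpr hv), one_smul]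
  · rw [IsSelfAdjoint, star_eq_conjTranspose, conjTranspose_eq_transpose_of_trivial,
      betweenClassMatrix, ← kroneckerMap_transpose, transpose_allOnes, transpose_betweenClassBlock]

lemma trace_betweenClassMatrix (hv : v ≠ 0) (hnt : nt ≠ 0) :
    (betweenClassMatrix v c nt).trace = c - 1 := by
  rw [betweenClassMatrix, trace_kronecker, trace_allOnes, trace_betweenClassBlock hnt]
  field_simp

end BetweenClass

/-- `H^D = (1_v 1_vᵀ) ⊗ H^D_blk` (an `n × n` matrix, `n = v·ñ`) has
eigenvalue `1` with multiplicity `c − 1` and eigenvalue `0` with multiplicity `n − c + 1`;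
in particular `H^D` is positive semi-definite, `‖H^D‖ = 1`, and `Kᵀ H^D K` is positive
semi-definite for every real `n × n` matrix `K`. -/
theorem stmt3 (v c nt : ℕ) (hv : 2 ≤ v) (hc : 2 ≤ c) (hnc : c ≤ nt) (hdvd : c ∣ nt) :
    let Hblk : Matrix (Fin nt) (Fin nt) ℝ :=
      ((c : ℝ) / ((v : ℝ) * nt)) • blockOnes nt c - ((1 : ℝ) / ((v : ℝ) * nt)) • allOnes nt
    let HD : Matrix (Fin v × Fin nt) (Fin v × Fin nt) ℝ := allOnes v ⊗ₖ Hblk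
    Polynomial.rootMultiplicity 1 HD.charpoly = c - 1 ∧
    Polynomial.rootMultiplicity 0 HD.charpoly = v * nt - c + 1 ∧
    HD.PosSemidef ∧
    specNorm HD = 1 ∧
    ∀ K : Matrix (Fin v × Fin nt) (Fin v × Fin nt) ℝ, (Kᵀ * HD * K).PosSemidef := by
  intro Hblk HD
  obtain ⟨m, rfl⟩ := hdvd
  have hm : 0 < m := Nat.pos_of_mul_pos_left (by omega : 0 < c * m)
  have hP : IsStarProjection HD := isStarProjection_betweenClassMatrix (by omega) (by omega) hm
  have hA : HD.IsHermitian := hP.isSelfAdjoint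
  have htrace : HD.trace = c - 1 := trace_betweenClassMatrix (by omega) (by positivity)
  have hone : HD.charpoly.rootMultiplicity 1 = c - 1 := by
    have := (hA.rootMultiplicity_one_charpoly_of_isIdempotentElem hP.isIdempotentElem).trans htrace
    rw [← Nat.cast_one, ← Nat.cast_sub (by omega)] at this
    exact_mod_cast this
  have hzero := hA.rootMultiplicity_zero_add_rootMultiplicity_one_charpoly hP.isIdempotentElem
  have hPSD : HD.PosSemidef := by
    have := posSemidef_conjTranspose_mul_self HD
    rwa [hA.eq, hP.isIdempotentElem.eq] at this
  have hne : HD ≠ 0 := fun h => by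
    rw [h, trace_zero] at htrace
    have : (2 : ℝ) ≤ c := by exact_mod_cast hc
    linarith
  refine ⟨hone, ?_, hPSD, specNorm_eq_one_of_isStarProjection hP hne, fun K => hPSD.conjTranspose_mul_mul_same K⟩
  rw [Fintype.card_prod, Fintype.card_fin, Fintype.card_fin, hone] at hzero
  have : c ≤ v * (c * m) := le_trans hnc (Nat.le_mul_of_pos_left _ (by omega))
  omega
end

section
/- Let d ≥ 1, σ > 0, and x, y ∈ ℝ^d. If w ∼ N(0, σ^{-2} I_d) and b ∼ Uniform([0, 2π]) are independent random variables, then E[ (√2 cos(wᵀx + b)) · (√2 cos(wᵀy + b)) ] = exp(−‖x−y‖²/(2σ²)); that is, the random Fourier feature map f_{w,b}(x) = √2 cos(wᵀx + b) gives an unbiased estimator of the Gaussian kernel. -/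
open MeasureTheory ProbabilityTheory Real
open scoped NNReal

/-!
Writing `2 cos α cos β = cos (α - β) + cos (α + β)`, averaging over the uniform phase `b` kills
the second term, which oscillates like `cos (θ + 2b)`, and leaves `cos (wᵀ(x - y))`. Its
expectation over the Gaussian `w` is the real part of the characteristic function of
`N(0, σ⁻² I)` at `x - y`, namely `exp (-σ⁻² ‖x - y‖² / 2)`.
-/

lemma integral_cos_inner_eq_re_charFun {E : Type*} [NormedAddCommGroup E] [InnerProductSpace ℝ E]
    [MeasurableSpace E] [OpensMeasurableSpace E] (μ : Measure E) [IsFiniteMeasure μ] (t : E) :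
    ∫ x, cos (inner ℝ x t) ∂μ = (charFun μ t).re := by
  have hint : Integrable (fun x => Complex.exp (inner ℝ x t * Complex.I)) μ :=
    Integrable.of_bound (by fun_prop) 1 (.of_forall fun x => by
      rw [Complex.norm_exp_ofReal_mul_I])
  rw [charFun_apply, ← RCLike.re_to_complex, ← integral_re hint]
  simp_rw [RCLike.re_to_complex, Complex.exp_ofReal_mul_I_re]

section Gaussian

variable {ι : Type*} [Fintype ι]

lemma charFun_map_toLp_pi_gaussianReal (v : ℝ≥0) (t : EuclideanSpace ℝ ι) :
    charFun ((Measure.pi fun _ : ι => gaussianReal 0 v).map (WithLp.toLp 2)) t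
      = (exp (-(v * ‖t‖ ^ 2 / 2)) : ℂ) := by
  simp_rw [charFun_pi, charFun_gaussianReal, ← Complex.exp_sum, EuclideanSpace.real_norm_sq_eq]
  push_cast
  congr 1
  simp [Finset.mul_sum, Finset.sum_div]

lemma integral_cos_sum_mul_pi_gaussianReal (v : ℝ≥0) (t : EuclideanSpace ℝ ι) :
    ∫ w : ι → ℝ, cos (∑ i, w i * t i) ∂(Measure.pi fun _ => gaussianReal 0 v)
      = exp (-(v * ‖t‖ ^ 2 / 2)) := by
  have h := integral_cos_inner_eq_re_charFun
    ((Measure.pi fun _ : ι => gaussianReal 0 v).map (WithLp.toLp 2)) t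
  rw [charFun_map_toLp_pi_gaussianReal, Complex.ofReal_re, ← MeasurableEquiv.coe_toLp,
    integral_map_equiv] at h
  simpa [PiLp.inner_apply, mul_comm] using h

end Gaussian

lemma sqrt_two_mul_cos_mul_sqrt_two_mul_cos (a b : ℝ) :
    (√2 * cos a) * (√2 * cos b) = cos (a - b) + cos (a + b) := by
  rw [mul_mul_mul_comm, mul_self_sqrt zero_le_two, ← mul_assoc, two_mul_cos_mul_cos]

lemma abs_sqrt_two_mul_cos_mul_sqrt_two_mul_cos_le (a b : ℝ) :
    |(√2 * cos a) * (√2 * cos b)| ≤ 2 := by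
  rw [sqrt_two_mul_cos_mul_sqrt_two_mul_cos]
  linarith [abs_add_le (cos (a - b)) (cos (a + b)), abs_cos_le_one (a - b), abs_cos_le_one (a + b)]

lemma integral_cos_add_int_mul_eq_zero (θ : ℝ) {n : ℤ} (hn : n ≠ 0) :
    ∫ b in (0 : ℝ)..2 * π, cos (θ + n * b) = 0 := by
  have hn' : (n : ℝ) ≠ 0 := by exact_mod_cast hn
  simp_rw [add_comm θ]
  rw [intervalIntegral.integral_comp_mul_add cos hn', integral_cos, mul_zero, zero_add,
    show (n : ℝ) * (2 * π) + θ = θ + n * (2 * π) by ring, sin_add_int_mul_two_pi, sub_self,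
    smul_zero]

local notation "uniformPhase" =>
  (ENNReal.ofReal (2 * π))⁻¹ • (volume.restrict (Set.Icc (0 : ℝ) (2 * π)))

instance isProbabilityMeasure_uniformPhase : IsProbabilityMeasure uniformPhase := by
  constructor
  rw [Measure.smul_apply, Measure.restrict_apply_univ, volume_Icc, sub_zero, smul_eq_mul,
    ENNReal.inv_mul_cancel (by simp [pi_pos]) ENNReal.ofReal_ne_top]

lemma integral_sqrt_two_mul_cos_mul_sqrt_two_mul_cos_uniformPhase (θ φ : ℝ) :
    ∫ b, (√2 * cos (θ + b)) * (√2 * cos (φ + b)) ∂uniformPhase = cos (θ - φ) := by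
  have hosc : ∫ b, cos (θ + φ + 2 * b) ∂uniformPhase = 0 := by
    have h := integral_cos_add_int_mul_eq_zero (θ + φ) two_ne_zero
    push_cast at h
    rw [integral_smul_measure, integral_Icc_eq_integral_Ioc,
      ← intervalIntegral.integral_of_le two_pi_pos.le, h, smul_zero]
  simp_rw [sqrt_two_mul_cos_mul_sqrt_two_mul_cos, add_sub_add_right_eq_sub,
    show ∀ b, θ + b + (φ + b) = θ + φ + 2 * b by intro b; ring]
  rw [integral_add (integrable_const _)
      (Integrable.of_bound (by fun_prop) 1 (.of_forall fun _ => abs_cos_le_one _)),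
    hosc, integral_const, probReal_univ, one_smul, add_zero]

theorem stmt6_general (d : ℕ) (σ : ℝ)
    (x y : EuclideanSpace ℝ (Fin d)) :
    ∫ p : (Fin d → ℝ) × ℝ,
        (Real.sqrt 2 * Real.cos (∑ i, p.1 i * x i + p.2)) *
        (Real.sqrt 2 * Real.cos (∑ i, p.1 i * y i + p.2))
        ∂((Measure.pi fun _ : Fin d => gaussianReal 0 ⟨σ⁻¹ ^ 2, sq_nonneg _⟩).prod
            ((ENNReal.ofReal (2 * Real.pi))⁻¹ •
              (volume.restrict (Set.Icc (0 : ℝ) (2 * Real.pi)))))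
      = Real.exp (-‖x - y‖ ^ 2 / (2 * σ ^ 2)) := by
  -- naming the variance lets instance search see `gaussianReal 0 v` as a probability measure
  set v : ℝ≥0 := ⟨σ⁻¹ ^ 2, sq_nonneg _⟩
  rw [integral_prod _ (Integrable.of_bound (by fun_prop) 2
    (.of_forall fun _ => abs_sqrt_two_mul_cos_mul_sqrt_two_mul_cos_le _ _))]
  simp_rw [integral_sqrt_two_mul_cos_mul_sqrt_two_mul_cos_uniformPhase, ← Finset.sum_sub_distrib,
    ← mul_sub, ← PiLp.sub_apply, integral_cos_sum_mul_pi_gaussianReal]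
  congr 1
  rw [show (v : ℝ) = σ⁻¹ ^ 2 from rfl]
  ring

/-- if `w ∼ N(0, σ⁻² I_d)` and `b ∼ Uniform([0, 2π])` are independent
(formalized via the product measure), then the random Fourier feature
`f_{w,b}(x) = √2 cos(wᵀx + b)` satisfies
`E[f_{w,b}(x) f_{w,b}(y)] = exp(−‖x−y‖²/(2σ²))`. -/
theorem stmt6 (d : ℕ) (hd : 1 ≤ d) (σ : ℝ) (hσ : 0 < σ)
    (x y : EuclideanSpace ℝ (Fin d)) :
    ∫ p : (Fin d → ℝ) × ℝ,
        (Real.sqrt 2 * Real.cos (∑ i, p.1 i * x i + p.2)) *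
        (Real.sqrt 2 * Real.cos (∑ i, p.1 i * y i + p.2))
        ∂((Measure.pi fun _ : Fin d => gaussianReal 0 ⟨σ⁻¹ ^ 2, sq_nonneg _⟩).prod
            ((ENNReal.ofReal (2 * Real.pi))⁻¹ •
              (volume.restrict (Set.Icc (0 : ℝ) (2 * Real.pi)))))
      = Real.exp (-‖x - y‖ ^ 2 / (2 * σ ^ 2)) :=
  stmt6_general d σ x y
end

section
/- Let F be a random vector in ℝ^n such that ‖F‖² ≤ n almost surely and E[F Fᵀ] = K for a positive semi-definite matrix K. Then E[(F Fᵀ − K)²] ⪯ nK in the Loewner (positive semi-definite) order, and consequently ‖E[(F Fᵀ − K)²]‖ ≤ n‖K‖. -/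
/-!
With `P = F Fᵀ` one has `P² = ‖F‖² P`, so `E[(P - K)²] = E[‖F‖² P] - K²` once `E[P] = K`. Hence
`n K - E[(P - K)²] = E[(n - ‖F‖²) P] + K²` is an expectation of positive semidefinite matrices
plus a square. The norm bound follows since `0 ⪯ A ⪯ B` forces `‖A‖ ≤ ‖B‖`: for positive
operators the norm is the supremum of the Rayleigh quotient, which is monotone in the operator.
-/

open Matrix MeasureTheory

namespace ContinuousLinearMap

variable {𝕜 E : Type*} [RCLike 𝕜] [NormedAddCommGroup E] [InnerProductSpace 𝕜 E]

theorem rayleighQuotient_nonneg {T : E →L[𝕜] E} (hT : T.IsPositive) (x : E) :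
    0 ≤ T.rayleighQuotient x :=
  div_nonneg (hT.re_inner_nonneg_left x) (sq_nonneg _)

theorem norm_le_norm_of_nonneg_of_le {T S : E →L[𝕜] E} (hT : 0 ≤ T) (hTS : T ≤ S) :
    ‖T‖ ≤ ‖S‖ := by
  rw [nonneg_iff_isPositive] at hT
  rw [T.norm_eq_iSup_rayleighQuotient hT.isSymmetric]
  refine ciSup_le fun x => ?_
  have hS : S.rayleighQuotient x = T.rayleighQuotient x + (S - T).rayleighQuotient x := by
    rw [← rayleighQuotient_add, add_sub_cancel]
  calc |T.rayleighQuotient x|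
      = T.rayleighQuotient x := abs_of_nonneg (rayleighQuotient_nonneg hT x)
    _ ≤ S.rayleighQuotient x := by rw [hS]; linarith [rayleighQuotient_nonneg hTS x]
    _ ≤ ‖S‖ := (le_abs_self _).trans (S.rayleighQuotient_le_norm x)

end ContinuousLinearMap

namespace Matrix

variable {I : Type*} [Fintype I] [DecidableEq I]

theorem PosSemidef.toEuclideanCLM_nonneg {A : Matrix I I ℝ} (hA : A.PosSemidef) :
    0 ≤ toEuclideanCLM (𝕜 := ℝ) A := by
  rwa [ContinuousLinearMap.nonneg_iff_isPositive,
    ← ContinuousLinearMap.isPositive_toLinearMap_iff, coe_toEuclideanCLM_eq_toEuclideanLin,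
    isPositive_toEuclideanLin_iff]

theorem specNorm_le_specNorm {A B : Matrix I I ℝ} (hA : A.PosSemidef)
    (hAB : (B - A).PosSemidef) : specNorm A ≤ specNorm B := by
  refine ContinuousLinearMap.norm_le_norm_of_nonneg_of_le hA.toEuclideanCLM_nonneg ?_
  rw [ContinuousLinearMap.le_def, ← ContinuousLinearMap.nonneg_iff_isPositive, ← map_sub]
  exact hAB.toEuclideanCLM_nonneg

theorem specNorm_smul (c : ℝ) (A : Matrix I I ℝ) : specNorm (c • A) = |c| * specNorm A := by
  rw [specNorm, specNorm, map_smul, norm_smul, Real.norm_eq_abs]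

end Matrix

section MatrixIntegral

variable {Ω : Type*} [MeasurableSpace Ω] {μ : Measure Ω} {l m p : Type*}

-- Expectations of random matrices are taken entrywise, as in the statement: `Matrix` carries no
-- global norm, so there is no Bochner integral of matrix-valued functions to fall back on.
noncomputable def matrixIntegral (μ : Measure Ω) (X : Ω → Matrix m p ℝ) : Matrix m p ℝ :=
  Matrix.of fun i j => ∫ ω, X ω i j ∂μ

def MatrixIntegrable (μ : Measure Ω) (X : Ω → Matrix m p ℝ) : Prop :=
  ∀ i j, Integrable (fun ω => X ω i j) μ

variable {X Y : Ω → Matrix m p ℝ}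

theorem MatrixIntegrable.add (hX : MatrixIntegrable μ X) (hY : MatrixIntegrable μ Y) :
    MatrixIntegrable μ fun ω => X ω + Y ω :=
  fun i j => (hX i j).add (hY i j)

theorem MatrixIntegrable.sub (hX : MatrixIntegrable μ X) (hY : MatrixIntegrable μ Y) :
    MatrixIntegrable μ fun ω => X ω - Y ω :=
  fun i j => (hX i j).sub (hY i j)

theorem MatrixIntegrable.const_smul (hX : MatrixIntegrable μ X) (c : ℝ) :
    MatrixIntegrable μ fun ω => c • X ω :=
  fun i j => (hX i j).const_mul c

theorem MatrixIntegrable.const_mul [Fintype m] (hX : MatrixIntegrable μ X) (A : Matrix l m ℝ) :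
    MatrixIntegrable μ fun ω => A * X ω := fun i j => by
  simpa only [mul_apply] using integrable_finsetSum _ fun k _ => (hX k j).const_mul (A i k)

theorem MatrixIntegrable.mul_const [Fintype p] (hX : MatrixIntegrable μ X) (A : Matrix p l ℝ) :
    MatrixIntegrable μ fun ω => X ω * A := fun i j => by
  simpa only [mul_apply] using integrable_finsetSum _ fun k _ => (hX i k).mul_const (A k j)

theorem matrixIntegrable_const [IsFiniteMeasure μ] (A : Matrix m p ℝ) :
    MatrixIntegrable μ fun _ => A :=
  fun _ _ => integrable_const _

theorem matrixIntegral_add (hX : MatrixIntegrable μ X) (hY : MatrixIntegrable μ Y) :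
    matrixIntegral μ (fun ω => X ω + Y ω) = matrixIntegral μ X + matrixIntegral μ Y := by
  ext i j
  exact integral_add (hX i j) (hY i j)

theorem matrixIntegral_sub (hX : MatrixIntegrable μ X) (hY : MatrixIntegrable μ Y) :
    matrixIntegral μ (fun ω => X ω - Y ω) = matrixIntegral μ X - matrixIntegral μ Y := by
  ext i j
  exact integral_sub (hX i j) (hY i j)

theorem matrixIntegral_smul (c : ℝ) (X : Ω → Matrix m p ℝ) :
    matrixIntegral μ (fun ω => c • X ω) = c • matrixIntegral μ X := by
  ext i j
  exact integral_const_mul c _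

theorem matrixIntegral_const_mul [Fintype m] (hX : MatrixIntegrable μ X) (A : Matrix l m ℝ) :
    matrixIntegral μ (fun ω => A * X ω) = A * matrixIntegral μ X := by
  ext i j
  simp only [matrixIntegral, of_apply, mul_apply]
  rw [integral_finsetSum _ fun k _ => (hX k j).const_mul (A i k)]
  simp only [integral_const_mul]

theorem matrixIntegral_mul_const [Fintype p] (hX : MatrixIntegrable μ X) (A : Matrix p l ℝ) :
    matrixIntegral μ (fun ω => X ω * A) = matrixIntegral μ X * A := by
  ext i j
  simp only [matrixIntegral, of_apply, mul_apply]
  rw [integral_finsetSum _ fun k _ => (hX i k).mul_const (A k j)]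
  simp only [integral_mul_const]

theorem matrixIntegral_const [IsProbabilityMeasure μ] (A : Matrix m p ℝ) :
    matrixIntegral μ (fun _ => A) = A := by
  ext i j
  simp [matrixIntegral]

theorem dotProduct_matrixIntegral_mulVec [Fintype m] [Fintype p] (hX : MatrixIntegrable μ X)
    (x : m → ℝ) (y : p → ℝ) :
    x ⬝ᵥ matrixIntegral μ X *ᵥ y = ∫ ω, x ⬝ᵥ X ω *ᵥ y ∂μ := by
  have hterm : ∀ i j, Integrable (fun ω => x i * (X ω i j * y j)) μ :=
    fun i j => ((hX i j).mul_const (y j)).const_mul (x i)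
  simp only [dotProduct, mulVec, matrixIntegral, of_apply, Finset.mul_sum]
  rw [integral_finsetSum _ fun i _ => integrable_finsetSum _ fun j _ => hterm i j]
  refine Finset.sum_congr rfl fun i _ => ?_
  rw [integral_finsetSum _ fun j _ => hterm i j]
  simp only [integral_const_mul, integral_mul_const]

theorem posSemidef_matrixIntegral [Fintype m] {X : Ω → Matrix m m ℝ}
    (hX : MatrixIntegrable μ X) (hpsd : ∀ᵐ ω ∂μ, (X ω).PosSemidef) :
    (matrixIntegral μ X).PosSemidef := by
  rw [posSemidef_iff_dotProduct_mulVec]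
  refine ⟨IsHermitian.ext fun i j => ?_, fun x => ?_⟩
  · exact integral_congr_ae (hpsd.mono fun ω h => h.isHermitian.apply i j)
  · rw [dotProduct_matrixIntegral_mulVec hX]
    exact integral_nonneg_of_ae (hpsd.mono fun ω h => h.dotProduct_mulVec_nonneg x)

end MatrixIntegral

section SecondMoment

variable {Ω : Type*} [MeasurableSpace Ω] {μ : Measure Ω} {I : Type*} [Fintype I]

noncomputable def secondMoment (μ : Measure Ω) (F : Ω → I → ℝ) : Matrix I I ℝ :=
  matrixIntegral μ fun ω => vecMulVec (F ω) (F ω)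

theorem abs_mul_le_dotProduct_self (f : I → ℝ) (s t : I) : |f s * f t| ≤ f ⬝ᵥ f := by
  have hle : ∀ u, f u ^ 2 ≤ f ⬝ᵥ f := fun u => by
    simpa only [dotProduct, sq] using
      Finset.single_le_sum (fun i _ => mul_self_nonneg (f i)) (Finset.mem_univ u)
  rw [abs_mul]
  nlinarith [hle s, hle t, sq_abs (f s), sq_abs (f t), sq_nonneg (|f s| - |f t|)]

theorem posSemidef_vecMulVec_self (f : I → ℝ) : (vecMulVec f f).PosSemidef := by
  simpa only [star_trivial] using posSemidef_vecMulVec_self_star f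

theorem mul_self_vecMulVec_sub (f : I → ℝ) (A : Matrix I I ℝ) :
    (vecMulVec f f - A) * (vecMulVec f f - A)
      = (f ⬝ᵥ f) • vecMulVec f f - A * vecMulVec f f - vecMulVec f f * A + A * A := by
  rw [sub_mul, mul_sub, mul_sub, vecMulVec_mul_vecMulVec, vecMulVec_smul]
  abel

variable {F : Ω → I → ℝ} {r : ℝ}

theorem matrixIntegrable_smul_vecMulVec [IsFiniteMeasure μ] (hF : Measurable F)
    (hbound : ∀ᵐ ω ∂μ, F ω ⬝ᵥ F ω ≤ r) {c : Ω → ℝ} (hc : Measurable c) {C : ℝ}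
    (hcC : ∀ᵐ ω ∂μ, |c ω| ≤ C) :
    MatrixIntegrable μ fun ω => c ω • vecMulVec (F ω) (F ω) := fun i j => by
  have hFi : ∀ i, Measurable fun ω => F ω i := fun i => (measurable_pi_apply i).comp hF
  refine Integrable.of_bound (hc.mul ((hFi i).mul (hFi j))).aestronglyMeasurable (C * r) ?_
  filter_upwards [hbound, hcC] with ω hFω hcω
  simp only [Matrix.smul_apply, vecMulVec_apply, smul_eq_mul, Real.norm_eq_abs]
  rw [abs_mul (c ω)]
  exact mul_le_mul hcω ((abs_mul_le_dotProduct_self (F ω) i j).trans hFω) (abs_nonneg _)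
    ((abs_nonneg _).trans hcω)

theorem matrixIntegrable_vecMulVec [IsFiniteMeasure μ] (hF : Measurable F)
    (hbound : ∀ᵐ ω ∂μ, F ω ⬝ᵥ F ω ≤ r) :
    MatrixIntegrable μ fun ω => vecMulVec (F ω) (F ω) := by
  simpa only [one_smul] using matrixIntegrable_smul_vecMulVec hF hbound measurable_const
    (ae_of_all μ fun _ => (abs_one (α := ℝ)).le)

theorem matrixIntegrable_dotProduct_smul_vecMulVec [IsFiniteMeasure μ] (hF : Measurable F)
    (hbound : ∀ᵐ ω ∂μ, F ω ⬝ᵥ F ω ≤ r) :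
    MatrixIntegrable μ fun ω => (F ω ⬝ᵥ F ω) • vecMulVec (F ω) (F ω) := by
  refine matrixIntegrable_smul_vecMulVec hF hbound (C := r) (by fun_prop) ?_
  filter_upwards [hbound] with ω hω
  have hq : 0 ≤ F ω ⬝ᵥ F ω := Finset.sum_nonneg fun i _ => mul_self_nonneg _
  rwa [abs_of_nonneg hq]

theorem posSemidef_secondMoment (hP : MatrixIntegrable μ fun ω => vecMulVec (F ω) (F ω)) :
    (secondMoment μ F).PosSemidef :=
  posSemidef_matrixIntegral hP (ae_of_all μ fun ω => posSemidef_vecMulVec_self (F ω))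

theorem posSemidef_matrixIntegral_mul_self_vecMulVec_sub [IsFiniteMeasure μ]
    (hF : Measurable F) (hbound : ∀ᵐ ω ∂μ, F ω ⬝ᵥ F ω ≤ r) {A : Matrix I I ℝ}
    (hA : A.IsHermitian) :
    (matrixIntegral μ fun ω =>
      (vecMulVec (F ω) (F ω) - A) * (vecMulVec (F ω) (F ω) - A)).PosSemidef := by
  have hP := matrixIntegrable_vecMulVec hF hbound
  have hint : MatrixIntegrable μ fun ω =>
      (vecMulVec (F ω) (F ω) - A) * (vecMulVec (F ω) (F ω) - A) := by
    simp_rw [mul_self_vecMulVec_sub]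
    exact (((matrixIntegrable_dotProduct_smul_vecMulVec hF hbound).sub (hP.const_mul A)).sub
      (hP.mul_const A)).add (matrixIntegrable_const _)
  refine posSemidef_matrixIntegral hint (ae_of_all μ fun ω => ?_)
  have hG := (posSemidef_vecMulVec_self (F ω)).isHermitian.sub hA
  simpa only [hG.eq] using posSemidef_conjTranspose_mul_self (vecMulVec (F ω) (F ω) - A)

theorem matrixIntegral_mul_self_vecMulVec_sub_secondMoment [IsProbabilityMeasure μ]
    (hF : Measurable F) (hbound : ∀ᵐ ω ∂μ, F ω ⬝ᵥ F ω ≤ r) :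
    matrixIntegral μ (fun ω => (vecMulVec (F ω) (F ω) - secondMoment μ F)
        * (vecMulVec (F ω) (F ω) - secondMoment μ F))
      = matrixIntegral μ (fun ω => (F ω ⬝ᵥ F ω) • vecMulVec (F ω) (F ω))
        - secondMoment μ F * secondMoment μ F := by
  have hP := matrixIntegrable_vecMulVec hF hbound
  have hqP := matrixIntegrable_dotProduct_smul_vecMulVec hF hbound
  set K := secondMoment μ F
  simp_rw [mul_self_vecMulVec_sub]
  rw [matrixIntegral_add ((hqP.sub (hP.const_mul K)).sub (hP.mul_const K))
      (matrixIntegrable_const _),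
    matrixIntegral_sub (hqP.sub (hP.const_mul K)) (hP.mul_const K),
    matrixIntegral_sub hqP (hP.const_mul K), matrixIntegral_const_mul hP,
    matrixIntegral_mul_const hP, matrixIntegral_const]
  change _ - K * K - K * K + K * K = _
  abel

theorem posSemidef_smul_secondMoment_sub [IsProbabilityMeasure μ] (hF : Measurable F)
    (hbound : ∀ᵐ ω ∂μ, F ω ⬝ᵥ F ω ≤ r) :
    (r • secondMoment μ F - matrixIntegral μ (fun ω =>
      (vecMulVec (F ω) (F ω) - secondMoment μ F)
        * (vecMulVec (F ω) (F ω) - secondMoment μ F))).PosSemidef := by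
  have hP := matrixIntegrable_vecMulVec hF hbound
  have hqP := matrixIntegrable_dotProduct_smul_vecMulVec hF hbound
  have hrqP : MatrixIntegrable μ fun ω => (r - F ω ⬝ᵥ F ω) • vecMulVec (F ω) (F ω) := by
    simpa only [sub_smul] using (hP.const_smul r).sub hqP
  have hK := posSemidef_secondMoment hP
  rw [matrixIntegral_mul_self_vecMulVec_sub_secondMoment hF hbound]
  set K := secondMoment μ F
  have hdecomp :
      r • K - (matrixIntegral μ (fun ω => (F ω ⬝ᵥ F ω) • vecMulVec (F ω) (F ω)) - K * K)
      = matrixIntegral μ (fun ω => (r - F ω ⬝ᵥ F ω) • vecMulVec (F ω) (F ω)) + K * K := by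
    simp_rw [sub_smul]
    rw [matrixIntegral_sub (hP.const_smul r) hqP, matrixIntegral_smul]
    change _ = r • K - _ + _
    abel
  rw [hdecomp]
  refine (posSemidef_matrixIntegral hrqP (hbound.mono fun ω hω =>
    (posSemidef_vecMulVec_self (F ω)).smul (sub_nonneg.2 hω))).add ?_
  simpa only [hK.isHermitian.eq] using posSemidef_conjTranspose_mul_self K

end SecondMoment

theorem stmt7_general {Ω : Type*} [MeasurableSpace Ω] (μ : Measure Ω) [IsProbabilityMeasure μ]
    (n : ℕ) (F : Ω → Fin n → ℝ) (hFmeas : Measurable F)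
    (K : Matrix (Fin n) (Fin n) ℝ)
    (hFbound : ∀ᵐ ω ∂μ, ∑ s, (F ω s) ^ 2 ≤ (n : ℝ))
    (hFmean : ∀ s t, ∫ ω, F ω s * F ω t ∂μ = K s t) :
    let M : Matrix (Fin n) (Fin n) ℝ :=
      Matrix.of fun s t =>
        ∫ ω, ((Matrix.vecMulVec (F ω) (F ω) - K) * (Matrix.vecMulVec (F ω) (F ω) - K)) s t ∂μ
    ((n : ℝ) • K - M).PosSemidef ∧ specNorm M ≤ (n : ℝ) * specNorm K := by
  intro M
  have hbound : ∀ᵐ ω ∂μ, F ω ⬝ᵥ F ω ≤ n := by simpa only [dotProduct, sq] using hFbound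
  obtain rfl : secondMoment μ F = K := Matrix.ext hFmean
  have hloewner : ((n : ℝ) • secondMoment μ F - M).PosSemidef :=
    posSemidef_smul_secondMoment_sub hFmeas hbound
  refine ⟨hloewner, ?_⟩
  calc specNorm M
      ≤ specNorm ((n : ℝ) • secondMoment μ F) := Matrix.specNorm_le_specNorm
        (posSemidef_matrixIntegral_mul_self_vecMulVec_sub hFmeas hbound
          (posSemidef_secondMoment (matrixIntegrable_vecMulVec hFmeas hbound)).isHermitian)
        hloewner
    _ = n * specNorm (secondMoment μ F) := by rw [Matrix.specNorm_smul, Nat.abs_cast]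

/-- if `F` is a random vector in `ℝⁿ` with `‖F‖² ≤ n` almost surely and
`E[F Fᵀ] = K` for a positive semi-definite `K`, then `E[(F Fᵀ − K)²] ⪯ n·K` in the
Loewner order, and consequently `‖E[(F Fᵀ − K)²]‖ ≤ n·‖K‖`.  (Expectations of matrices
are taken entrywise.) -/
theorem stmt7 {Ω : Type*} [MeasurableSpace Ω] (μ : Measure Ω) [IsProbabilityMeasure μ]
    (n : ℕ) (F : Ω → Fin n → ℝ) (hFmeas : Measurable F)
    (K : Matrix (Fin n) (Fin n) ℝ) (hK : K.PosSemidef)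
    (hFbound : ∀ᵐ ω ∂μ, ∑ s, (F ω s) ^ 2 ≤ (n : ℝ))
    (hFmean : ∀ s t, ∫ ω, F ω s * F ω t ∂μ = K s t) :
    let M : Matrix (Fin n) (Fin n) ℝ :=
      Matrix.of fun s t =>
        ∫ ω, ((Matrix.vecMulVec (F ω) (F ω) - K) * (Matrix.vecMulVec (F ω) (F ω) - K)) s t ∂μ
    ((n : ℝ) • K - M).PosSemidef ∧ specNorm M ≤ (n : ℝ) * specNorm K :=
  stmt7_general μ n F hFmeas K hFbound hFmean
end

section
/- Let v ≥ 1 and n = vñ. Let K = diag(K_1,…,K_v) and K̂ = diag(K̂_1,…,K̂_v) be real block-diagonal n×n matrices, H^D and H^S the multi-view structure matrices with ‖H^D‖ = ‖H^S‖ = 1 and Kᵀ H^S K positive semi-definite, and set D = Kᵀ H^D K, S = Kᵀ H^S K, D̂ = K̂ᵀ H^D K̂, Ŝ = K̂ᵀ H^S K̂. Let ε > 0 and suppose ‖K_j − K̂_j‖ ≤ ξ for all j = 1,…,v. Then, writing ‖K*‖ = max_j ‖K_j‖, ‖K̂*‖ = max_j ‖K̂_j‖, and C = (1+√5)/2: ‖(S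 + εI)^{-1} D − (Ŝ + εI)^{-1} D̂‖ ≤ C·‖K*‖²·(‖K*‖+‖K̂*‖)·ξ/ε² + (‖K*‖+‖K̂*‖)·ξ/ε. -/
open Matrix

/-!
Write `A = S + εI`, `Â = Ŝ + εI`. Then `A⁻¹D − Â⁻¹D̂ = (A⁻¹ − Â⁻¹)D + Â⁻¹(D − D̂)` and
`A⁻¹ − Â⁻¹ = Â⁻¹(Ŝ − S)A⁻¹`. Positive semidefiniteness of `S` and `Ŝ` gives
`⟪x, Ax⟫ ≥ ε‖x‖²`, hence `‖A⁻¹‖, ‖Â⁻¹‖ ≤ 1/ε`, and for `‖H‖ ≤ 1` the identity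
`KᵀHK − K̂ᵀHK̂ = KᵀH(K − K̂) + (K − K̂)ᵀHK̂` bounds both `‖D − D̂‖` and `‖S − Ŝ‖` by
`(‖K‖ + ‖K̂‖)‖K − K̂‖`. The norm of a block-diagonal matrix is at most the largest norm of a block.
-/

open scoped Matrix.Norms.L2Operator RealInnerProductSpace

lemma specNorm_eq_l2_opNorm {I : Type*} [Fintype I] [DecidableEq I] (A : Matrix I I ℝ) :
    specNorm A = ‖A‖ :=
  rfl

lemma EuclideanSpace.norm_sq_eq_sum_norm_sq_slice {m o : Type*} [Fintype m] [Fintype o]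
    (x : EuclideanSpace ℝ (m × o)) :
    ‖x‖ ^ 2 = ∑ j, ‖WithLp.toLp 2 (fun i => x (i, j))‖ ^ 2 := by
  simp only [EuclideanSpace.norm_sq_eq, Fintype.sum_prod_type_right]

namespace Matrix

lemma PosSemidef.transpose_mul_mul_same {m n R : Type*} [Fintype n] [Finite m] [Ring R]
    [PartialOrder R] [StarRing R] [TrivialStar R] {H : Matrix n n R} (hH : H.PosSemidef)
    (K : Matrix n m R) : (Kᵀ * H * K).PosSemidef := by
  simpa only [conjTranspose_eq_transpose_of_trivial] using hH.conjTranspose_mul_mul_same K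

lemma blockDiagonal_mulVec_apply {m n o α : Type*} [Fintype n] [Fintype o] [DecidableEq o]
    [NonUnitalNonAssocSemiring α] (M : o → Matrix m n α) (x : n × o → α) (i : m) (j : o) :
    (blockDiagonal M *ᵥ x) (i, j) = (M j *ᵥ fun k => x (k, j)) i := by
  simp only [mulVec, dotProduct, Fintype.sum_prod_type_right, blockDiagonal_apply]
  rw [Finset.sum_eq_single j] <;> simp +contextual [eq_comm]

lemma l2_opNorm_blockDiagonal_le {m o : Type*} [Fintype m] [DecidableEq m] [Fintype o]
    [DecidableEq o] (M : o → Matrix m m ℝ) {C : ℝ} (hC : 0 ≤ C) (h : ∀ j, ‖M j‖ ≤ C) :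
    ‖blockDiagonal M‖ ≤ C := by
  rw [← l2_opNorm_toEuclideanCLM]
  refine ContinuousLinearMap.opNorm_le_bound _ hC fun x => ?_
  rw [← pow_le_pow_iff_left₀ (norm_nonneg _) (by positivity) two_ne_zero, mul_pow,
    EuclideanSpace.norm_sq_eq_sum_norm_sq_slice, EuclideanSpace.norm_sq_eq_sum_norm_sq_slice,
    Finset.mul_sum]
  refine Finset.sum_le_sum fun j _ => ?_
  have hslice : WithLp.toLp 2 (fun i => toEuclideanCLM (𝕜 := ℝ) (blockDiagonal M) x (i, j)) =
      toEuclideanCLM (𝕜 := ℝ) (M j) (WithLp.toLp 2 fun i => x (i, j)) := by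
    ext i
    exact blockDiagonal_mulVec_apply M _ i j
  rw [hslice, ← mul_pow]
  gcongr
  exact (ContinuousLinearMap.le_opNorm _ _).trans (by gcongr; exact h j)

lemma l2_opNorm_transpose {m n : Type*} [Fintype m] [Fintype n] [DecidableEq m]
    [DecidableEq n] (A : Matrix m n ℝ) : ‖Aᵀ‖ = ‖A‖ := by
  rw [← conjTranspose_eq_transpose_of_trivial, l2_opNorm_conjTranspose]

variable {n : Type*} [Fintype n] [DecidableEq n]

lemma l2_opNorm_transpose_mul_mul_le (K H : Matrix n n ℝ) :
    ‖Kᵀ * H * K‖ ≤ ‖H‖ * ‖K‖ ^ 2 := by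
  calc ‖Kᵀ * H * K‖ ≤ ‖Kᵀ‖ * ‖H‖ * ‖K‖ := norm_mul₃_le
    _ = ‖H‖ * ‖K‖ ^ 2 := by rw [l2_opNorm_transpose]; ring

lemma l2_opNorm_transpose_mul_mul_sub_le (K K' H : Matrix n n ℝ) :
    ‖Kᵀ * H * K - K'ᵀ * H * K'‖ ≤ ‖H‖ * ((‖K‖ + ‖K'‖) * ‖K - K'‖) := by
  have hsplit : Kᵀ * H * K - K'ᵀ * H * K' = Kᵀ * H * (K - K') + (K - K')ᵀ * H * K' := by
    rw [transpose_sub]; noncomm_ring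
  calc ‖Kᵀ * H * K - K'ᵀ * H * K'‖
      ≤ ‖Kᵀ‖ * ‖H‖ * ‖K - K'‖ + ‖(K - K')ᵀ‖ * ‖H‖ * ‖K'‖ :=
        hsplit ▸ norm_add_le_of_le norm_mul₃_le norm_mul₃_le
    _ = ‖H‖ * ((‖K‖ + ‖K'‖) * ‖K - K'‖) := by simp only [l2_opNorm_transpose]; ring

lemma PosSemidef.isUnit_add_smul_one {S : Matrix n n ℝ} (hS : S.PosSemidef) {ε : ℝ}
    (hε : 0 < ε) : IsUnit (S + ε • 1) :=
  (PosDef.posSemidef_add hS (PosDef.one.smul hε)).isUnit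

lemma mul_norm_le_norm_toEuclideanCLM_add_smul_one {S : Matrix n n ℝ} (hS : S.PosSemidef)
    (ε : ℝ) (x : EuclideanSpace ℝ n) :
    ε * ‖x‖ ≤ ‖toEuclideanCLM (𝕜 := ℝ) (S + ε • 1) x‖ := by
  have hinner : ε * ‖x‖ ^ 2 ≤ ⟪x, toEuclideanCLM (𝕜 := ℝ) (S + ε • 1) x⟫ := by
    have hSx : 0 ≤ ⟪x, toEuclideanCLM (𝕜 := ℝ) S x⟫ := by
      simpa [inner_toEuclideanCLM] using hS.dotProduct_mulVec_nonneg (WithLp.ofLp x)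
    simp only [map_add, map_smul, map_one, _root_.add_apply, _root_.smul_apply,
      one_apply_eq_self, inner_add_right, inner_smul_right, inner_self_eq_norm_sq_to_K,
      Real.ringHom_apply]
    linarith
  have hcs := hinner.trans (real_inner_le_norm _ _)
  rcases (norm_nonneg x).eq_or_lt with hx | hx
  · rw [← hx, mul_zero]; positivity
  · nlinarith

lemma l2_opNorm_inv_add_smul_one_le {S : Matrix n n ℝ} (hS : S.PosSemidef) {ε : ℝ}
    (hε : 0 < ε) : ‖(S + ε • 1)⁻¹‖ ≤ ε⁻¹ := by
  refine ContinuousLinearMap.opNorm_le_bound _ (by positivity) fun y => ?_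
  have hy := mul_norm_le_norm_toEuclideanCLM_add_smul_one hS ε
    (toEuclideanCLM (𝕜 := ℝ) (S + ε • 1)⁻¹ y)
  rw [← mul_apply_eq_comp, ← map_mul,
    mul_nonsing_inv _ ((isUnit_iff_isUnit_det _).1 (hS.isUnit_add_smul_one hε)), map_one,
    one_apply_eq_self] at hy
  rwa [inv_mul_eq_div, le_div_iff₀' hε]

lemma l2_opNorm_inv_mul_sub_inv_mul_le {HD HS : Matrix n n ℝ} (hHS : HS.PosSemidef)
    (hHD1 : ‖HD‖ ≤ 1) (hHS1 : ‖HS‖ ≤ 1) {K K' : Matrix n n ℝ} {a b c ε : ℝ} (hK : ‖K‖ ≤ a)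
    (hK' : ‖K'‖ ≤ b) (hKK' : ‖K - K'‖ ≤ c) (hε : 0 < ε) :
    ‖(Kᵀ * HS * K + ε • 1)⁻¹ * (Kᵀ * HD * K) - (K'ᵀ * HS * K' + ε • 1)⁻¹ * (K'ᵀ * HD * K')‖ ≤
      a ^ 2 * (a + b) * c / ε ^ 2 + (a + b) * c / ε := by
  set A := Kᵀ * HS * K + ε • 1
  set A' := K'ᵀ * HS * K' + ε • 1
  set D := Kᵀ * HD * K
  set D' := K'ᵀ * HD * K'
  have ha : 0 ≤ a := (norm_nonneg _).trans hK
  have hb : 0 ≤ b := (norm_nonneg _).trans hK'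
  have hc : 0 ≤ c := (norm_nonneg _).trans hKK'
  have hS := hHS.transpose_mul_mul_same K
  have hS' := hHS.transpose_mul_mul_same K'
  have hA := l2_opNorm_inv_add_smul_one_le hS hε
  have hA' := l2_opNorm_inv_add_smul_one_le hS' hε
  have hsandwich_sub {H : Matrix n n ℝ} (hH : ‖H‖ ≤ 1) :
      ‖Kᵀ * H * K - K'ᵀ * H * K'‖ ≤ (a + b) * c :=
    (l2_opNorm_transpose_mul_mul_sub_le K K' H).trans <| mul_le_of_le_one_left
      (by positivity) hH |>.trans <| mul_le_mul (add_le_add hK hK') hKK' (norm_nonneg _)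
      (by positivity)
  have hD : ‖D‖ ≤ a ^ 2 := (l2_opNorm_transpose_mul_mul_le K HD).trans <|
    mul_le_of_le_one_left (by positivity) hHD1 |>.trans <| pow_le_pow_left₀ (norm_nonneg _) hK 2
  have hinv_sub : ‖A⁻¹ - A'⁻¹‖ ≤ ε⁻¹ * ((a + b) * c) * ε⁻¹ := by
    rw [norm_sub_rev, inv_sub_inv (iff_of_true (hS'.isUnit_add_smul_one hε)
      (hS.isUnit_add_smul_one hε)), add_sub_add_right_eq_sub]
    exact norm_mul₃_le.trans <| mul_le_mul (mul_le_mul hA' (hsandwich_sub hHS1)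
      (norm_nonneg _) (by positivity)) hA (norm_nonneg _) (by positivity)
  calc ‖A⁻¹ * D - A'⁻¹ * D'‖ = ‖(A⁻¹ - A'⁻¹) * D + A'⁻¹ * (D - D')‖ := by noncomm_ring
    _ ≤ ‖A⁻¹ - A'⁻¹‖ * ‖D‖ + ‖A'⁻¹‖ * ‖D - D'‖ :=
        norm_add_le_of_le (norm_mul_le _ _) (norm_mul_le _ _)
    _ ≤ ε⁻¹ * ((a + b) * c) * ε⁻¹ * a ^ 2 + ε⁻¹ * ((a + b) * c) :=
        add_le_add (mul_le_mul hinv_sub hD (norm_nonneg _) (by positivity))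
          (mul_le_mul hA' (hsandwich_sub hHD1) (norm_nonneg _) (by positivity))
    _ = a ^ 2 * (a + b) * c / ε ^ 2 + (a + b) * c / ε := by field_simp

end Matrix

theorem stmt15_general (v nt : ℕ) (hv : 1 ≤ v)
    (Kb Khb : Fin v → Matrix (Fin nt) (Fin nt) ℝ)
    (HD HS : Matrix (Fin nt × Fin v) (Fin nt × Fin v) ℝ)
    (hHS : HS.PosSemidef)
    (hnHD : specNorm HD = 1) (hnHS : specNorm HS = 1)
    (ε ξ : ℝ) (hε : 0 < ε) (hξ : ∀ j, specNorm (Kb j - Khb j) ≤ ξ) :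
    let K := Matrix.blockDiagonal Kb
    let Kh := Matrix.blockDiagonal Khb
    let D := Kᵀ * HD * K
    let S := Kᵀ * HS * K
    let Dh := Khᵀ * HD * Kh
    let Sh := Khᵀ * HS * Kh
    let Kstar := ⨆ j, specNorm (Kb j)
    let Khstar := ⨆ j, specNorm (Khb j)
    specNorm ((S + ε • 1)⁻¹ * D - (Sh + ε • 1)⁻¹ * Dh) ≤
      ((1 + Real.sqrt 5) / 2) * Kstar ^ 2 * (Kstar + Khstar) * ξ / ε ^ 2 +
        (Kstar + Khstar) * ξ / ε := by
  intro K Kh D S Dh Sh Kstar Khstar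
  simp only [specNorm_eq_l2_opNorm] at hnHD hnHS hξ ⊢
  have hKstar : 0 ≤ Kstar := Real.iSup_nonneg fun j => norm_nonneg _
  have hKhstar : 0 ≤ Khstar := Real.iSup_nonneg fun j => norm_nonneg _
  have hξ0 : 0 ≤ ξ := (norm_nonneg _).trans (hξ ⟨0, hv⟩)
  have hK : ‖K‖ ≤ Kstar :=
    l2_opNorm_blockDiagonal_le Kb hKstar (le_ciSup (Finite.bddAbove_range _))
  have hKh : ‖Kh‖ ≤ Khstar :=
    l2_opNorm_blockDiagonal_le Khb hKhstar (le_ciSup (Finite.bddAbove_range _))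
  have hKKh : ‖K - Kh‖ ≤ ξ := by
    rw [← blockDiagonal_sub]
    exact l2_opNorm_blockDiagonal_le _ hξ0 hξ
  have hC : 1 ≤ (1 + Real.sqrt 5) / 2 := by
    have : 1 ≤ Real.sqrt 5 := Real.one_le_sqrt.mpr (by norm_num)
    linarith
  have hterm : 0 ≤ Kstar ^ 2 * (Kstar + Khstar) * ξ / ε ^ 2 := by positivity
  calc ‖(S + ε • 1)⁻¹ * D - (Sh + ε • 1)⁻¹ * Dh‖
      ≤ Kstar ^ 2 * (Kstar + Khstar) * ξ / ε ^ 2 + (Kstar + Khstar) * ξ / ε :=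
        l2_opNorm_inv_mul_sub_inv_mul_le hHS hnHD.le hnHS.le hK hKh hKKh hε
    _ ≤ _ := by linear_combination mul_le_mul_of_nonneg_right hC hterm

/-- with block-diagonal kernel matrices `K = diag(K₁,…,K_v)`,
`K̂ = diag(K̂₁,…,K̂_v)`, positive semi-definite structure matrices `H^D, H^S` of spectral
norm `1` (so in particular `S = Kᵀ H^S K` is positive semi-definite), `ε > 0`, and
`‖K_j − K̂_j‖ ≤ ξ` for all `j`, one has
`‖(S+εI)⁻¹D − (Ŝ+εI)⁻¹D̂‖ ≤ C‖K*‖²(‖K*‖+‖K̂*‖)ξ/ε² + (‖K*‖+‖K̂*‖)ξ/ε`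
with `C = (1+√5)/2`, `‖K*‖ = max_j ‖K_j‖`, `‖K̂*‖ = max_j ‖K̂_j‖`. -/
theorem stmt15 (v nt : ℕ) (hv : 1 ≤ v)
    (Kb Khb : Fin v → Matrix (Fin nt) (Fin nt) ℝ)
    (HD HS : Matrix (Fin nt × Fin v) (Fin nt × Fin v) ℝ)
    (hHD : HD.PosSemidef) (hHS : HS.PosSemidef)
    (hnHD : specNorm HD = 1) (hnHS : specNorm HS = 1)
    (hSpsd : ((Matrix.blockDiagonal Kb)ᵀ * HS * Matrix.blockDiagonal Kb).PosSemidef)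
    (ε ξ : ℝ) (hε : 0 < ε) (hξ : ∀ j, specNorm (Kb j - Khb j) ≤ ξ) :
    let K := Matrix.blockDiagonal Kb
    let Kh := Matrix.blockDiagonal Khb
    let D := Kᵀ * HD * K
    let S := Kᵀ * HS * K
    let Dh := Khᵀ * HD * Kh
    let Sh := Khᵀ * HS * Kh
    let Kstar := ⨆ j, specNorm (Kb j)
    let Khstar := ⨆ j, specNorm (Khb j)
    specNorm ((S + ε • 1)⁻¹ * D - (Sh + ε • 1)⁻¹ * Dh) ≤
      ((1 + Real.sqrt 5) / 2) * Kstar ^ 2 * (Kstar + Khstar) * ξ / ε ^ 2 +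
        (Kstar + Khstar) * ξ / ε :=
  stmt15_general v nt hv Kb Khb HD HS hHS hnHD hnHS ε ξ hε hξ
end
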